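/- arXiv:2310.02147 — 5 statements merged into one kernel-verified Lean document; each statement's English description precedes it below -/
import Mathlib

section
/- (Lemma 1) The function h_0(θ, λ) := Δ_0(θ, λ) · G, where Δ_0(θ, λ) := r(s,a) + (1−a)·λ − I_0(θ) + max_{a'∈{0,1}} f_0(θ; φ(s', a')) − f_0(θ; φ(s, a)) and G ∈ (ℝ^d)^m is the vector whose r-th block is m^{−1/2} b_r · 1{⟨w_{r,0}, φ(s,a)⟩ > 0} · φ(s,a), is globally Lipschitz with constants 3 in θ and 1 in λ: for all parameters θ_1, θ_2 and reals λ_1, λ_2, ‖h_0(θ_1, λ_1) − h_0(θ_2, λ_2)‖ ≤ 3‖θ_1 − θ_2‖ + |λ_1 − λ_2|. -/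
/-!
The linearized network is linear in `θ`: `f₀(θ; ψ) = ⟪g(ψ), θ⟫` for the gradient feature
`g(ψ)` whose `r`-th block is `m^{-1/2} b_r 1{⟨w_{r,0}, ψ⟩ > 0} ψ`, and `G = g(φ(s, a))`.
Since `|b_r| = 1`, `‖g(ψ)‖² ≤ m · m⁻¹ · ‖ψ‖² ≤ 1` for `‖ψ‖ ≤ 1`, so every `f₀(·; ψ)` is
1-Lipschitz in `θ`. Hence so are the average `I₀` and the maximum over `a'`, `Δ₀` is
3-Lipschitz in `θ` and 1-Lipschitz in `λ`, and multiplying by `G` with `‖G‖ ≤ 1` keeps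
these constants.
-/

open Finset RealInnerProductSpace

section BlockSMul

variable {ι E : Type*} [NormedAddCommGroup E] [InnerProductSpace ℝ E]

def blockSMul (c : ι → ℝ) (ψ : E) : PiLp 2 fun _ : ι => E :=
  WithLp.toLp 2 fun r => c r • ψ

@[simp]
lemma blockSMul_apply (c : ι → ℝ) (ψ : E) (r : ι) : blockSMul c ψ r = c r • ψ := rfl

variable [Fintype ι]

lemma norm_blockSMul_sq (c : ι → ℝ) (ψ : E) :
    ‖blockSMul c ψ‖ ^ 2 = (∑ r, c r ^ 2) * ‖ψ‖ ^ 2 := by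
  simp only [PiLp.norm_sq_eq_of_L2, blockSMul_apply, norm_smul, Real.norm_eq_abs, mul_pow,
    sq_abs, sum_mul]

lemma norm_blockSMul_le {c : ι → ℝ} (hc : ∑ r, c r ^ 2 ≤ 1) (ψ : E) :
    ‖blockSMul c ψ‖ ≤ ‖ψ‖ := by
  refine pow_le_pow_iff_left₀ (norm_nonneg _) (norm_nonneg _) two_ne_zero |>.mp ?_
  rw [norm_blockSMul_sq]
  exact mul_le_of_le_one_left (by positivity) hc

lemma inner_blockSMul (c : ι → ℝ) (ψ : E) (θ : PiLp 2 fun _ : ι => E) :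
    ⟪blockSMul c ψ, θ⟫ = ∑ r, c r * ⟪ψ, θ r⟫ := by
  simp only [PiLp.inner_apply, blockSMul_apply, real_inner_smul_left]

end BlockSMul

section Gate

variable {ι E : Type*} [Fintype ι] [NormedAddCommGroup E] [InnerProductSpace ℝ E]

noncomputable def gate (b : ι → ℝ) (w0 : ι → E) (ψ : E) (r : ι) : ℝ :=
  (√(Fintype.card ι))⁻¹ * b r * if 0 < ⟪w0 r, ψ⟫ then 1 else 0

lemma sq_gate_le {b : ι → ℝ} (hb : ∀ r, |b r| ≤ 1) (w0 : ι → E) (ψ : E) (r : ι) :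
    gate b w0 ψ r ^ 2 ≤ (Fintype.card ι : ℝ)⁻¹ := by
  have hb2 : b r ^ 2 ≤ 1 := (sq_le_one_iff_abs_le_one _).mpr (hb r)
  have hind : (if 0 < ⟪w0 r, ψ⟫ then (1 : ℝ) else 0) ^ 2 ≤ 1 := by split_ifs <;> norm_num
  calc gate b w0 ψ r ^ 2
      = (Fintype.card ι : ℝ)⁻¹ * b r ^ 2 * (if 0 < ⟪w0 r, ψ⟫ then (1 : ℝ) else 0) ^ 2 := by
        rw [gate, mul_pow, mul_pow, inv_pow, Real.sq_sqrt (Nat.cast_nonneg _)]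
    _ ≤ (Fintype.card ι : ℝ)⁻¹ * 1 * 1 := by gcongr
    _ = (Fintype.card ι : ℝ)⁻¹ := by ring

lemma sum_sq_gate_le_one {b : ι → ℝ} (hb : ∀ r, |b r| ≤ 1) (w0 : ι → E) (ψ : E) :
    ∑ r, gate b w0 ψ r ^ 2 ≤ 1 :=
  calc ∑ r, gate b w0 ψ r ^ 2 ≤ ∑ _r : ι, (Fintype.card ι : ℝ)⁻¹ :=
        sum_le_sum fun r _ => sq_gate_le hb w0 ψ r
    _ = Fintype.card ι * (Fintype.card ι : ℝ)⁻¹ := by simp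
    _ ≤ 1 := mul_inv_le_one

end Gate

lemma abs_inner_sub_inner_le {F : Type*} [NormedAddCommGroup F] [InnerProductSpace ℝ F]
    {v : F} (hv : ‖v‖ ≤ 1) (x y : F) : |⟪v, x⟫ - ⟪v, y⟫| ≤ ‖x - y‖ := by
  rw [← inner_sub_right]
  exact (abs_real_inner_le_norm _ _).trans (mul_le_of_le_one_left (norm_nonneg _) hv)

lemma abs_sum_sub_sum_le {ι : Type*} (s : Finset ι) {u v : ι → ℝ} {L : ℝ}
    (h : ∀ i ∈ s, |u i - v i| ≤ L) : |∑ i ∈ s, u i - ∑ i ∈ s, v i| ≤ s.card * L := by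
  rw [← sum_sub_distrib]
  exact (abs_sum_le_sum_abs _ _).trans (by simpa using sum_le_card_nsmul s _ L h)

lemma abs_average_pair_sub_le {S : Type*} [Fintype S] {u v : S → Fin 2 → ℝ} {L : ℝ} (hL : 0 ≤ L)
    (h : ∀ st i, |u st i - v st i| ≤ L) :
    |1 / (2 * (Fintype.card S : ℝ)) * ∑ st, (u st 0 + u st 1)
      - 1 / (2 * (Fintype.card S : ℝ)) * ∑ st, (v st 0 + v st 1)| ≤ L := by
  have hsum := abs_sum_sub_sum_le univ (u := fun st => u st 0 + u st 1)
    (v := fun st => v st 0 + v st 1) (L := 2 * L) fun st _ => by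
      have h0 := h st 0
      have h1 := h st 1
      rw [abs_le] at h0 h1 ⊢
      constructor <;> linarith
  rw [← mul_sub, abs_mul, abs_of_nonneg (by positivity)]
  calc 1 / (2 * (Fintype.card S : ℝ)) * |_|
      ≤ 1 / (2 * Fintype.card S) * (Fintype.card S * (2 * L)) :=
        mul_le_mul_of_nonneg_left hsum (by positivity)
    _ = (Fintype.card S * (Fintype.card S : ℝ)⁻¹) * L := by ring
    _ ≤ L := mul_le_of_le_one_left hL mul_inv_le_one

theorem stmt_3_general (m d : ℕ)
    (b : Fin m → ℝ) (hb : ∀ r, b r = 1 ∨ b r = -1)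
    (w0 : Fin m → EuclideanSpace ℝ (Fin d))
    (f0 : (PiLp 2 fun _ : Fin m => EuclideanSpace ℝ (Fin d)) →
      EuclideanSpace ℝ (Fin d) → ℝ)
    (hf0 : ∀ θ φ, f0 θ φ = (Real.sqrt m)⁻¹ *
      ∑ r, b r * (if (0 : ℝ) < inner ℝ (w0 r) φ then (inner ℝ (θ r) φ : ℝ) else 0))
    (S : Type) [Fintype S]
    (φ : S → Fin 2 → EuclideanSpace ℝ (Fin d)) (hφ : ∀ s a, ‖φ s a‖ ≤ 1)
    (rew : S → Fin 2 → ℝ)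
    (s : S) (a : Fin 2) (s' : S)
    (I0 : (PiLp 2 fun _ : Fin m => EuclideanSpace ℝ (Fin d)) → ℝ)
    (hI0 : ∀ θ, I0 θ = (1 / (2 * (Fintype.card S : ℝ))) *
      ∑ st, (f0 θ (φ st 0) + f0 θ (φ st 1)))
    (Δ0 : (PiLp 2 fun _ : Fin m => EuclideanSpace ℝ (Fin d)) → ℝ → ℝ)
    (hΔ0 : ∀ θ lam, Δ0 θ lam =
      rew s a + (1 - (a.val : ℝ)) * lam - I0 θ
        + max (f0 θ (φ s' 0)) (f0 θ (φ s' 1)) - f0 θ (φ s a))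
    (G : PiLp 2 fun _ : Fin m => EuclideanSpace ℝ (Fin d))
    (hG : ∀ r, G r =
      ((Real.sqrt m)⁻¹ * b r *
        (if (0 : ℝ) < inner ℝ (w0 r) (φ s a) then (1 : ℝ) else 0)) • φ s a)
    (h0 : (PiLp 2 fun _ : Fin m => EuclideanSpace ℝ (Fin d)) → ℝ →
      PiLp 2 fun _ : Fin m => EuclideanSpace ℝ (Fin d))
    (hh0 : ∀ θ lam, h0 θ lam = Δ0 θ lam • G)
    (θ₁ θ₂ : PiLp 2 fun _ : Fin m => EuclideanSpace ℝ (Fin d)) (lam₁ lam₂ : ℝ) :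
    ‖h0 θ₁ lam₁ - h0 θ₂ lam₂‖ ≤ 3 * ‖θ₁ - θ₂‖ + |lam₁ - lam₂| := by
  set n := ‖θ₁ - θ₂‖
  set g : EuclideanSpace ℝ (Fin d) → PiLp 2 (fun _ : Fin m => EuclideanSpace ℝ (Fin d)) :=
    fun ψ => blockSMul (gate b w0 ψ) ψ
  have hgate : ∀ ψ r, gate b w0 ψ r = (√m)⁻¹ * b r * if 0 < ⟪w0 r, ψ⟫ then 1 else 0 := by
    simp [gate]
  have hf : ∀ θ ψ, f0 θ ψ = ⟪g ψ, θ⟫ := by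
    intro θ ψ
    rw [hf0, inner_blockSMul, mul_sum]
    refine sum_congr rfl fun r _ => ?_
    rw [hgate, real_inner_comm ψ (θ r)]
    split_ifs <;> ring
  have hb1 : ∀ r, |b r| ≤ 1 := fun r => by rcases hb r with h | h <;> simp [h]
  have hg : ∀ ψ, ‖ψ‖ ≤ 1 → ‖g ψ‖ ≤ 1 := fun ψ hψ =>
    (norm_blockSMul_le (sum_sq_gate_le_one hb1 w0 ψ) ψ).trans hψ
  have hf_lip : ∀ ψ, ‖ψ‖ ≤ 1 → |f0 θ₁ ψ - f0 θ₂ ψ| ≤ n := fun ψ hψ => by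
    rw [hf, hf]
    exact abs_inner_sub_inner_le (hg ψ hψ) θ₁ θ₂
  have hI : |I0 θ₁ - I0 θ₂| ≤ n := by
    simpa only [hI0] using
      abs_average_pair_sub_le (norm_nonneg _) fun st i => hf_lip _ (hφ st i)
  have hmax : |max (f0 θ₁ (φ s' 0)) (f0 θ₁ (φ s' 1)) - max (f0 θ₂ (φ s' 0)) (f0 θ₂ (φ s' 1))|
      ≤ n :=
    (abs_max_sub_max_le_max _ _ _ _).trans (max_le (hf_lip _ (hφ s' 0)) (hf_lip _ (hφ s' 1)))
  have hlam : |(1 - (a.val : ℝ)) * (lam₁ - lam₂)| ≤ |lam₁ - lam₂| := by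
    rw [abs_mul]
    refine mul_le_of_le_one_left (abs_nonneg _) ?_
    fin_cases a <;> norm_num
  have hΔ : |Δ0 θ₁ lam₁ - Δ0 θ₂ lam₂| ≤ 3 * n + |lam₁ - lam₂| := by
    have hfa := hf_lip _ (hφ s a)
    rw [hΔ0, hΔ0, abs_le]
    rw [abs_le] at hI hmax hlam hfa
    constructor <;> linarith
  have hG : ‖G‖ ≤ 1 := by
    convert hg _ (hφ s a)
    ext1 r
    rw [hG, blockSMul_apply, hgate]
  rw [hh0, hh0, ← sub_smul, norm_smul, Real.norm_eq_abs]
  exact (mul_le_of_le_one_right (abs_nonneg _) hG).trans hΔ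

/-- Lemma 1: `h₀(θ, λ) := Δ₀(θ, λ) • G`, with
`Δ₀(θ,λ) = r(s,a) + (1−a)λ − I₀(θ) + max_{a'} f₀(θ;φ(s',a')) − f₀(θ;φ(s,a))`
and `G` the vector whose `r`-th block is `m^{−1/2} b_r 1{⟨w_{r,0},φ(s,a)⟩>0} φ(s,a)`,
is globally Lipschitz: `‖h₀(θ₁,λ₁) − h₀(θ₂,λ₂)‖ ≤ 3‖θ₁−θ₂‖ + |λ₁−λ₂|`. -/
theorem stmt_3 (m d : ℕ) (hm : 0 < m) (hd : 0 < d)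
    (b : Fin m → ℝ) (hb : ∀ r, b r = 1 ∨ b r = -1)
    (w0 : Fin m → EuclideanSpace ℝ (Fin d))
    (f0 : (PiLp 2 fun _ : Fin m => EuclideanSpace ℝ (Fin d)) →
      EuclideanSpace ℝ (Fin d) → ℝ)
    (hf0 : ∀ θ φ, f0 θ φ = (Real.sqrt m)⁻¹ *
      ∑ r, b r * (if (0 : ℝ) < inner ℝ (w0 r) φ then (inner ℝ (θ r) φ : ℝ) else 0))
    (S : Type) [Fintype S] [Nonempty S]
    (φ : S → Fin 2 → EuclideanSpace ℝ (Fin d)) (hφ : ∀ s a, ‖φ s a‖ ≤ 1)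
    (rew : S → Fin 2 → ℝ)
    (s : S) (a : Fin 2) (s' : S)
    (I0 : (PiLp 2 fun _ : Fin m => EuclideanSpace ℝ (Fin d)) → ℝ)
    (hI0 : ∀ θ, I0 θ = (1 / (2 * (Fintype.card S : ℝ))) *
      ∑ st, (f0 θ (φ st 0) + f0 θ (φ st 1)))
    (Δ0 : (PiLp 2 fun _ : Fin m => EuclideanSpace ℝ (Fin d)) → ℝ → ℝ)
    (hΔ0 : ∀ θ lam, Δ0 θ lam =
      rew s a + (1 - (a.val : ℝ)) * lam - I0 θ
        + max (f0 θ (φ s' 0)) (f0 θ (φ s' 1)) - f0 θ (φ s a))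
    (G : PiLp 2 fun _ : Fin m => EuclideanSpace ℝ (Fin d))
    (hG : ∀ r, G r =
      ((Real.sqrt m)⁻¹ * b r *
        (if (0 : ℝ) < inner ℝ (w0 r) (φ s a) then (1 : ℝ) else 0)) • φ s a)
    (h0 : (PiLp 2 fun _ : Fin m => EuclideanSpace ℝ (Fin d)) → ℝ →
      PiLp 2 fun _ : Fin m => EuclideanSpace ℝ (Fin d))
    (hh0 : ∀ θ lam, h0 θ lam = Δ0 θ lam • G)
    (θ₁ θ₂ : PiLp 2 fun _ : Fin m => EuclideanSpace ℝ (Fin d)) (lam₁ lam₂ : ℝ) :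
    ‖h0 θ₁ lam₁ - h0 θ₂ lam₂‖ ≤ 3 * ‖θ₁ - θ₂‖ + |lam₁ - lam₂| :=
  stmt_3_general m d b hb w0 f0 hf0 S φ hφ rew s a s' I0 hI0 Δ0 hΔ0 G hG h0 hh0 θ₁ θ₂ lam₁ lam₂
end

section
/- For every feature vector φ ∈ ℝ^d with ‖φ‖ ≤ 1 and every parameter θ = (w_1, …, w_m), the gap between the two-layer ReLU network and its local linearization at the initialization θ_0 = (w_{1,0}, …, w_{m,0}) satisfies |f(θ; φ) − f_0(θ; φ)| ≤ ‖θ − θ_0‖. -/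
/-! The ReLU unit and its linearization gated at `w_{r,0}` differ only where the signs of
`⟨w_r, φ⟩` and `⟨w_{r,0}, φ⟩` disagree, and there by at most `|⟨w_r - w_{r,0}, φ⟩| ≤ ‖w_r - w_{r,0}‖`.
Summing over the `m` units and applying Cauchy–Schwarz gives
`∑ r, ‖w_r - w_{r,0}‖ ≤ √m ‖θ - θ₀‖`, which the normalisation `m^{-1/2}` cancels. -/

open Finset RealInnerProductSpace

lemma abs_max_zero_sub_ite_le_abs_sub (x y : ℝ) :
    |max 0 x - (if 0 < y then x else 0)| ≤ |x - y| := by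
  split_ifs with hy
  · rcases le_total 0 x with hx | hx
    · simp [max_eq_right hx]
    · rw [max_eq_left hx, zero_sub, abs_neg, abs_of_nonpos hx, abs_of_neg (by linarith)]
      linarith
  · rcases le_total 0 x with hx | hx
    · rw [max_eq_right hx, sub_zero, abs_of_nonneg hx, abs_of_nonneg (by linarith)]
      linarith
    · simp [max_eq_left hx]

lemma abs_inner_sub_inner_le_norm_sub {E : Type*} [NormedAddCommGroup E] [InnerProductSpace ℝ E]
    {v : E} (hv : ‖v‖ ≤ 1) (x y : E) : |⟪x, v⟫ - ⟪y, v⟫| ≤ ‖x - y‖ :=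
  calc |⟪x, v⟫ - ⟪y, v⟫| = |⟪x - y, v⟫| := by rw [inner_sub_left]
    _ ≤ ‖x - y‖ * ‖v‖ := abs_real_inner_le_norm _ _
    _ ≤ ‖x - y‖ := mul_le_of_le_one_right (norm_nonneg _) hv

lemma PiLp.sum_norm_le_sqrt_card_mul_norm {ι : Type*} [Fintype ι] {β : ι → Type*}
    [∀ i, SeminormedAddCommGroup (β i)] (x : PiLp 2 β) :
    ∑ i, ‖x i‖ ≤ √(Fintype.card ι) * ‖x‖ := by
  simpa [PiLp.norm_eq_of_L2] using Real.sum_mul_le_sqrt_mul_sqrt univ (fun _ ↦ 1) (‖x ·‖)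

lemma inv_sqrt_mul_sqrt_mul_le {a : ℝ} (n : ℕ) (ha : 0 ≤ a) : (√n)⁻¹ * (√n * a) ≤ a := by
  rcases Nat.eq_zero_or_pos n with rfl | hn
  · simpa using ha
  · rw [inv_mul_cancel_left₀ (by positivity)]

theorem stmt_6_general (m d : ℕ)
    (b : Fin m → ℝ) (hb : ∀ r, b r = 1 ∨ b r = -1)
    (w0 : Fin m → EuclideanSpace ℝ (Fin d))
    (θ0 : PiLp 2 fun _ : Fin m => EuclideanSpace ℝ (Fin d))
    (hθ0 : ∀ r, θ0 r = w0 r)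
    (φ : EuclideanSpace ℝ (Fin d)) (hφ : ‖φ‖ ≤ 1)
    (f f0 : (PiLp 2 fun _ : Fin m => EuclideanSpace ℝ (Fin d)) → ℝ)
    (hf : ∀ θ, f θ = (Real.sqrt m)⁻¹ *
      ∑ r, b r * max 0 (inner ℝ (θ r) φ : ℝ))
    (hf0 : ∀ θ, f0 θ = (Real.sqrt m)⁻¹ *
      ∑ r, b r * (if (0 : ℝ) < inner ℝ (w0 r) φ then (inner ℝ (θ r) φ : ℝ) else 0))
    (θ : PiLp 2 fun _ : Fin m => EuclideanSpace ℝ (Fin d)) :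
    |f θ - f0 θ| ≤ ‖θ - θ0‖ := by
  have hunit : ∀ r, |b r * max 0 ⟪θ r, φ⟫ - b r * (if 0 < ⟪w0 r, φ⟫ then ⟪θ r, φ⟫ else 0)|
      ≤ ‖(θ - θ0) r‖ := fun r ↦ by
    have hbr : |b r| = 1 := by rcases hb r with h | h <;> simp [h]
    rw [← mul_sub, abs_mul, hbr, one_mul, PiLp.sub_apply, hθ0]
    exact (abs_max_zero_sub_ite_le_abs_sub _ _).trans (abs_inner_sub_inner_le_norm_sub hφ _ _)
  rw [hf, hf0, ← mul_sub, ← sum_sub_distrib, abs_mul, abs_inv, abs_of_nonneg (Real.sqrt_nonneg _)]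
  calc (√m)⁻¹ * |∑ r, _| ≤ (√m)⁻¹ * ∑ r, ‖(θ - θ0) r‖ := by
        gcongr; exact (abs_sum_le_sum_abs _ _).trans (sum_le_sum fun r _ ↦ hunit r)
    _ ≤ (√m)⁻¹ * (√m * ‖θ - θ0‖) := by
        gcongr; simpa using PiLp.sum_norm_le_sqrt_card_mul_norm (θ - θ0)
    _ ≤ ‖θ - θ0‖ := inv_sqrt_mul_sqrt_mul_le m (norm_nonneg _)

/-- for every feature `φ` with `‖φ‖ ≤ 1` and every parameter `θ`,
the gap between the ReLU network and its local linearization at the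
initialization `θ₀ = (w_{1,0}, …, w_{m,0})` satisfies
`|f(θ;φ) − f₀(θ;φ)| ≤ ‖θ − θ₀‖`. -/
theorem stmt_6 (m d : ℕ) (hm : 0 < m) (hd : 0 < d)
    (b : Fin m → ℝ) (hb : ∀ r, b r = 1 ∨ b r = -1)
    (w0 : Fin m → EuclideanSpace ℝ (Fin d))
    (θ0 : PiLp 2 fun _ : Fin m => EuclideanSpace ℝ (Fin d))
    (hθ0 : ∀ r, θ0 r = w0 r)
    (φ : EuclideanSpace ℝ (Fin d)) (hφ : ‖φ‖ ≤ 1)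
    (f f0 : (PiLp 2 fun _ : Fin m => EuclideanSpace ℝ (Fin d)) → ℝ)
    (hf : ∀ θ, f θ = (Real.sqrt m)⁻¹ *
      ∑ r, b r * max 0 (inner ℝ (θ r) φ : ℝ))
    (hf0 : ∀ θ, f0 θ = (Real.sqrt m)⁻¹ *
      ∑ r, b r * (if (0 : ℝ) < inner ℝ (w0 r) φ then (inner ℝ (θ r) φ : ℝ) else 0))
    (θ : PiLp 2 fun _ : Fin m => EuclideanSpace ℝ (Fin d)) :
    |f θ - f0 θ| ≤ ‖θ - θ0‖ :=
  stmt_6_general m d b hb w0 θ0 hθ0 φ hφ f f0 hf hf0 θ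
end

section
/- If in addition the step sizes α and η are non-increasing, then with x := L_h α_0 + L_g η_0, for every k ≥ τ (τ a natural number) the windowed drift satisfies ‖θ_k − θ_{k−τ}‖ + |λ_k − λ_{k−τ}| ≤ ((1 + x)^τ − 1) · (‖θ_{k−τ}‖ + |λ_{k−τ}| + 1). -/
/-- if moreover the step sizes are non-increasing, then with
`x := L_h α_0 + L_g η_0`, for every `k ≥ τ`:
`‖θ_k − θ_{k−τ}‖ + |λ_k − λ_{k−τ}| ≤ ((1+x)^τ − 1) (‖θ_{k−τ}‖ + |λ_{k−τ}| + 1)`. -/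
theorem stmt_8 {E : Type*} [NormedAddCommGroup E] [NormedSpace ℝ E]
    (θ : ℕ → E) (lam : ℕ → ℝ) (Lh Lg : ℝ) (hLh : 0 ≤ Lh) (hLg : 0 ≤ Lg)
    (α η : ℕ → ℝ) (hα : ∀ k, 0 ≤ α k) (hη : ∀ k, 0 ≤ η k)
    (hαmono : Antitone α) (hηmono : Antitone η)
    (hθstep : ∀ k, ‖θ (k + 1) - θ k‖ ≤ Lh * α k * (‖θ k‖ + |lam k| + 1))
    (hlamstep : ∀ k, |lam (k + 1) - lam k| ≤ Lg * η k * (‖θ k‖ + |lam k| + 1))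
    (τ : ℕ) :
    ∀ k, τ ≤ k →
      ‖θ k - θ (k - τ)‖ + |lam k - lam (k - τ)| ≤
        ((1 + (Lh * α 0 + Lg * η 0)) ^ τ - 1) * (‖θ (k - τ)‖ + |lam (k - τ)| + 1) := by
  set x := Lh * α 0 + Lg * η 0 with hxdef
  have hx : 0 ≤ x := add_nonneg (mul_nonneg hLh (hα 0)) (mul_nonneg hLg (hη 0))
  have key : ∀ m j, ‖θ (m + j) - θ m‖ + |lam (m + j) - lam m| ≤
      ((1 + x) ^ j - 1) * (‖θ m‖ + |lam m| + 1) := by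
    intro m j
    induction j with
    | zero => simp
    | succ j ih =>
      set B := ‖θ m‖ + |lam m| + 1 with hB
      have hB0 : 0 ≤ B := by positivity
      have hpow : (1:ℝ) ≤ (1 + x) ^ j := one_le_pow₀ (by linarith)
      have hC : ‖θ (m + j)‖ + |lam (m + j)| + 1 ≤ (1 + x) ^ j * B := by
        have h1 : ‖θ (m + j)‖ ≤ ‖θ m‖ + ‖θ (m + j) - θ m‖ := by
          have := norm_add_le (θ m) (θ (m + j) - θ m)
          simpa using this
        have h2 : |lam (m + j)| ≤ |lam m| + |lam (m + j) - lam m| := by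
          have := abs_add_le (lam m) (lam (m + j) - lam m)
          simpa using this
        nlinarith [ih]
      have hCnn : 0 ≤ ‖θ (m + j)‖ + |lam (m + j)| + 1 := by positivity
      have hstepx : Lh * α (m + j) + Lg * η (m + j) ≤ x := by
        have := hαmono (Nat.zero_le (m + j))
        have := hηmono (Nat.zero_le (m + j))
        rw [hxdef]
        gcongr <;> assumption
      have hθ' : ‖θ (m + j + 1) - θ m‖ ≤ ‖θ (m + j + 1) - θ (m + j)‖ + ‖θ (m + j) - θ m‖ := by
        have := norm_add_le (θ (m + j + 1) - θ (m + j)) (θ (m + j) - θ m)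
        simpa using this
      have hl' : |lam (m + j + 1) - lam m| ≤
          |lam (m + j + 1) - lam (m + j)| + |lam (m + j) - lam m| := by
        have := abs_add_le (lam (m + j + 1) - lam (m + j)) (lam (m + j) - lam m)
        simpa using this
      have hstep : ‖θ (m + j + 1) - θ (m + j)‖ + |lam (m + j + 1) - lam (m + j)| ≤
          x * ((1 + x) ^ j * B) := by
        calc ‖θ (m + j + 1) - θ (m + j)‖ + |lam (m + j + 1) - lam (m + j)| ≤
            (Lh * α (m + j) + Lg * η (m + j)) * (‖θ (m + j)‖ + |lam (m + j)| + 1) := by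
              rw [add_mul]; exact add_le_add (hθstep (m + j)) (hlamstep (m + j))
          _ ≤ x * ((1 + x) ^ j * B) := by
              apply mul_le_mul hstepx hC hCnn hx
      have : ‖θ (m + (j + 1)) - θ m‖ + |lam (m + (j + 1)) - lam m| ≤
          x * ((1 + x) ^ j * B) + ((1 + x) ^ j - 1) * B := by
        have e : m + (j + 1) = m + j + 1 := rfl
        rw [e]; linarith
      calc ‖θ (m + (j + 1)) - θ m‖ + |lam (m + (j + 1)) - lam m| ≤
          x * ((1 + x) ^ j * B) + ((1 + x) ^ j - 1) * B := this
        _ = ((1 + x) ^ (j + 1) - 1) * B := by ring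
  intro k hk
  have hmk : k - τ + τ = k := Nat.sub_add_cancel hk
  have := key (k - τ) τ
  rwa [hmk] at this
end

section
/- (Lemma 9, bounded parameter drift) Assume the step sizes α and η are non-increasing and (L_h α_0 + L_g η_0)·τ ≤ 1/4 for a natural number τ ≥ 1. Then for every k ≥ τ, ‖θ_k − θ_0‖ + |λ_k − λ_0| ≤ [ 1/2 + (3/2) Σ_{t=τ}^{k−1} (L_h α_t + L_g η_t) Π_{i=0}^{t−τ} (L_h α_{τ+i} + L_g η_{τ+i} + 1) ] · (‖θ_0‖ + |λ_0| + 1). -/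
/-- Auxiliary recurrence lemma: abstract form of the drift bound. -/
theorem stmt_10_aux (c S0 : ℕ → ℝ) (D : ℕ → ℝ)
    (hc0 : ∀ k, 0 ≤ c k) (hcmono : ∀ j k : ℕ, j ≤ k → c k ≤ c j)
    (S : ℝ) (hS0 : 0 ≤ S)
    (hD0 : ∀ k, 0 ≤ D k) (hD00 : D 0 = 0)
    (hstep : ∀ k, D (k + 1) ≤ (1 + c k) * D k + c k * S)
    (τ : ℕ) (hτ : 1 ≤ τ) (hcτ : c 0 * (τ:ℝ) ≤ 1 / 4) :
    ∀ k, τ ≤ k → D k ≤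
      (1 / 2 + (3 / 2) * ∑ t ∈ Finset.Ico τ k,
        c t * ∏ i ∈ Finset.range (t - τ + 1), (c (τ + i) + 1)) * S := by
  -- Phase 1: for k ≤ τ, D k ≤ 2 k c0 S
  have h1 : ∀ k, k ≤ τ → D k ≤ 2 * k * c 0 * S := by
    intro k
    induction k with
    | zero => intro _; rw [hD00]; norm_num
    | succ n ih =>
      intro hn
      have hn' : n ≤ τ := Nat.le_of_succ_le hn
      have hDn := ih hn'
      have hcn : c n ≤ c 0 := hcmono 0 n (Nat.zero_le n)
      have hnτ : (n:ℝ) ≤ (τ:ℝ) := by exact_mod_cast hn'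
      have hnc : (n:ℝ) * c 0 ≤ 1 / 4 := by
        have := mul_le_mul_of_nonneg_right hnτ (hc0 0)
        linarith
      have hs := hstep n
      have e1 : (1 + c n) * D n ≤ (1 + c 0) * (2 * n * c 0 * S) :=
        mul_le_mul (by linarith) hDn (hD0 n) (by linarith [hc0 0])
      have e2 : c n * S ≤ c 0 * S := mul_le_mul_of_nonneg_right hcn hS0
      have e3 : (n:ℝ) * c 0 * (c 0 * S) ≤ (1/4) * (c 0 * S) :=
        mul_le_mul_of_nonneg_right hnc (mul_nonneg (hc0 0) hS0)
      have e4 : 0 ≤ c 0 * S := mul_nonneg (hc0 0) hS0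
      have goal2 : D (n+1) ≤ 2 * ((n:ℝ) + 1) * c 0 * S := by nlinarith
      calc D (n+1) ≤ 2 * ((n:ℝ) + 1) * c 0 * S := goal2
        _ = 2 * ((n+1 : ℕ):ℝ) * c 0 * S := by push_cast; ring
  have hDτ : D τ ≤ (1 / 2) * S := by
    have hb := h1 τ le_rfl
    have h2τ : 2 * (τ:ℝ) * c 0 ≤ 1/2 := by linarith [hcτ]
    have := mul_le_mul_of_nonneg_right h2τ hS0
    linarith
  have hprodpos : ∀ k, (1:ℝ) ≤ ∏ t ∈ Finset.Ico τ k, (1 + c t) := by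
    intro k
    have := Finset.prod_le_prod (s := Finset.Ico τ k) (f := fun _ => (1:ℝ))
      (g := fun t => 1 + c t) (fun i _ => zero_le_one)
      (fun i _ => by show (1:ℝ) ≤ 1 + c i; linarith [hc0 i])
    simpa using this
  -- Phase 2
  have h2 : ∀ k, τ ≤ k →
      D k ≤ ((3/2) * ∏ t ∈ Finset.Ico τ k, (1 + c t) - 1) * S := by
    intro k hk
    induction k, hk using Nat.le_induction with
    | base =>
      rw [Finset.Ico_self, Finset.prod_empty]
      calc D τ ≤ (1/2) * S := hDτ
        _ = ((3/2) * 1 - 1) * S := by ring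
    | succ n hn ih =>
      have hs := hstep n
      rw [Finset.prod_Ico_succ_top hn]
      have key : (1 + c n) * D n ≤
          (1 + c n) * (((3/2) * ∏ t ∈ Finset.Ico τ n, (1 + c t) - 1) * S) :=
        mul_le_mul_of_nonneg_left ih (by linarith [hc0 n])
      have expand : (1 + c n) * (((3/2) * ∏ t ∈ Finset.Ico τ n, (1 + c t) - 1) * S) + c n * S
          = ((3/2) * ((∏ t ∈ Finset.Ico τ n, (1 + c t)) * (1 + c n)) - 1) * S := by ring
      linarith
  -- Telescoping
  have h3 : ∀ k, τ ≤ k →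
      (∏ t ∈ Finset.Ico τ k, (1 + c t)) - 1 ≤
        ∑ t ∈ Finset.Ico τ k, c t *
          ∏ i ∈ Finset.range (t - τ + 1), (c (τ + i) + 1) := by
    intro k hk
    induction k, hk using Nat.le_induction with
    | base => simp
    | succ n hn ih =>
      rw [Finset.prod_Ico_succ_top hn, Finset.sum_Ico_succ_top hn]
      have hP := hprodpos n
      have hPle : (∏ t ∈ Finset.Ico τ n, (1 + c t)) ≤
          ∏ i ∈ Finset.range (n - τ + 1), (c (τ + i) + 1) := by
        have heq : (∏ t ∈ Finset.Ico τ n, (1 + c t)) =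
            ∏ i ∈ Finset.range (n - τ), (1 + c (τ + i)) := by
          rw [Finset.prod_Ico_eq_prod_range]
        have heq2 : (∏ i ∈ Finset.range (n - τ), (1 + c (τ + i))) =
            ∏ i ∈ Finset.range (n - τ), (c (τ + i) + 1) := by
          apply Finset.prod_congr rfl; intros; ring
        rw [heq, heq2, Finset.prod_range_succ]
        have hnn : 0 ≤ ∏ i ∈ Finset.range (n - τ), (c (τ + i) + 1) :=
          Finset.prod_nonneg (fun i _ => by linarith [hc0 (τ + i)])
        nlinarith [mul_nonneg hnn (hc0 (τ + (n - τ)))]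
      have hcP : c n * (∏ t ∈ Finset.Ico τ n, (1 + c t)) ≤
          c n * ∏ i ∈ Finset.range (n - τ + 1), (c (τ + i) + 1) :=
        mul_le_mul_of_nonneg_left hPle (hc0 n)
      nlinarith
  intro k hk
  calc D k ≤ ((3/2) * ∏ t ∈ Finset.Ico τ k, (1 + c t) - 1) * S := h2 k hk
    _ = (1/2 + (3/2) * ((∏ t ∈ Finset.Ico τ k, (1 + c t)) - 1)) * S := by ring
    _ ≤ (1 / 2 + (3 / 2) * ∑ t ∈ Finset.Ico τ k, c t *
          ∏ i ∈ Finset.range (t - τ + 1), (c (τ + i) + 1)) * S := by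
        apply mul_le_mul_of_nonneg_right _ hS0
        linarith [h3 k hk]

/-- Lemma 9, bounded parameter drift: assume non-increasing step
sizes and `(L_h α_0 + L_g η_0)·τ ≤ 1/4` for some `τ ≥ 1`. Then for every `k ≥ τ`:
`‖θ_k − θ_0‖ + |λ_k − λ_0| ≤
 [1/2 + (3/2) Σ_{t=τ}^{k−1} (L_h α_t + L_g η_t) Π_{i=0}^{t−τ} (L_h α_{τ+i} + L_g η_{τ+i} + 1)]
 · (‖θ_0‖ + |λ_0| + 1)`. -/
theorem stmt_10 {E : Type*} [NormedAddCommGroup E] [NormedSpace ℝ E]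
    (θ : ℕ → E) (lam : ℕ → ℝ) (Lh Lg : ℝ) (hLh : 0 ≤ Lh) (hLg : 0 ≤ Lg)
    (α η : ℕ → ℝ) (hα : ∀ k, 0 ≤ α k) (hη : ∀ k, 0 ≤ η k)
    (hαmono : Antitone α) (hηmono : Antitone η)
    (hθstep : ∀ k, ‖θ (k + 1) - θ k‖ ≤ Lh * α k * (‖θ k‖ + |lam k| + 1))
    (hlamstep : ∀ k, |lam (k + 1) - lam k| ≤ Lg * η k * (‖θ k‖ + |lam k| + 1))
    (τ : ℕ) (hτ : 1 ≤ τ) (hsmall : (Lh * α 0 + Lg * η 0) * τ ≤ 1 / 4) :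
    ∀ k, τ ≤ k →
      ‖θ k - θ 0‖ + |lam k - lam 0| ≤
        (1 / 2 + (3 / 2) * ∑ t ∈ Finset.Ico τ k,
          (Lh * α t + Lg * η t) *
            ∏ i ∈ Finset.range (t - τ + 1), (Lh * α (τ + i) + Lg * η (τ + i) + 1)) *
          (‖θ 0‖ + |lam 0| + 1) := by
  have hc0 : ∀ k, 0 ≤ Lh * α k + Lg * η k := fun k =>
    add_nonneg (mul_nonneg hLh (hα k)) (mul_nonneg hLg (hη k))
  have hcmono : ∀ j k : ℕ, j ≤ k → Lh * α k + Lg * η k ≤ Lh * α j + Lg * η j := fun j k h =>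
    add_le_add (mul_le_mul_of_nonneg_left (hαmono h) hLh)
      (mul_le_mul_of_nonneg_left (hηmono h) hLg)
  have hS0 : (0:ℝ) ≤ ‖θ 0‖ + |lam 0| + 1 := by
    have := norm_nonneg (θ 0); have := abs_nonneg (lam 0); linarith
  have hD0 : ∀ k, (0:ℝ) ≤ ‖θ k - θ 0‖ + |lam k - lam 0| := fun k =>
    add_nonneg (norm_nonneg _) (abs_nonneg _)
  have hSD : ∀ k : ℕ, ‖θ k‖ + |lam k| + 1 ≤
      (‖θ 0‖ + |lam 0| + 1) + (‖θ k - θ 0‖ + |lam k - lam 0|) := fun k => by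
    have h1 : ‖θ k‖ - ‖θ 0‖ ≤ ‖θ k - θ 0‖ := norm_sub_norm_le (θ k) (θ 0)
    have h2 : |lam k| - |lam 0| ≤ |lam k - lam 0| := abs_sub_abs_le_abs_sub (lam k) (lam 0)
    linarith
  have hstep : ∀ k, ‖θ (k+1) - θ 0‖ + |lam (k+1) - lam 0| ≤
      (1 + (Lh * α k + Lg * η k)) * (‖θ k - θ 0‖ + |lam k - lam 0|)
        + (Lh * α k + Lg * η k) * (‖θ 0‖ + |lam 0| + 1) := fun k => by
    have h1 : ‖θ (k+1) - θ 0‖ ≤ ‖θ (k+1) - θ k‖ + ‖θ k - θ 0‖ := by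
      calc ‖θ (k+1) - θ 0‖ = ‖(θ (k+1) - θ k) + (θ k - θ 0)‖ := by abel_nf
        _ ≤ ‖θ (k+1) - θ k‖ + ‖θ k - θ 0‖ := norm_add_le _ _
    have h2 : |lam (k+1) - lam 0| ≤ |lam k - lam 0| + |lam (k+1) - lam k| := by
      have := abs_sub_le (lam (k+1)) (lam k) (lam 0); linarith
    have h34 : ‖θ (k+1) - θ k‖ + |lam (k+1) - lam k| ≤
        (Lh * α k + Lg * η k) * (‖θ k‖ + |lam k| + 1) := by
      rw [add_mul]; exact add_le_add (hθstep k) (hlamstep k)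
    have h6 : (Lh * α k + Lg * η k) * (‖θ k‖ + |lam k| + 1) ≤
        (Lh * α k + Lg * η k) *
          ((‖θ 0‖ + |lam 0| + 1) + (‖θ k - θ 0‖ + |lam k - lam 0|)) :=
      mul_le_mul_of_nonneg_left (hSD k) (hc0 k)
    nlinarith [hc0 k, hD0 k]
  have := stmt_10_aux (fun k => Lh * α k + Lg * η k) (fun _ => 0)
    (fun k => ‖θ k - θ 0‖ + |lam k - lam 0|) hc0 hcmono
    (‖θ 0‖ + |lam 0| + 1) hS0 hD0 (by simp) hstep τ hτ hsmall
  exact this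
end

section
/- (Final recursion of Theorem 2) Let a : ℕ → ℝ, let c ≥ 0, and let τ ≥ 1 be a natural number. If for every k ≥ τ one has (k+1)² · a_{k+1} ≤ k² · a_k + c · (k+1)^{1/3}, then for every k ≥ τ, a_{k+1} ≤ τ² · a_τ / (k+1)² + c / (k+1)^{2/3}. -/
/-- final recursion of Theorem 2: if for every `k ≥ τ`
`(k+1)² a_{k+1} ≤ k² a_k + c (k+1)^{1/3}`, then for every `k ≥ τ`,
`a_{k+1} ≤ τ² a_τ / (k+1)² + c / (k+1)^{2/3}`. -/
theorem stmt_12 (a : ℕ → ℝ) (c : ℝ) (hc : 0 ≤ c) (τ : ℕ) (hτ : 1 ≤ τ)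
    (hrec : ∀ k, τ ≤ k →
      ((k : ℝ) + 1) ^ 2 * a (k + 1) ≤
        (k : ℝ) ^ 2 * a k + c * ((k : ℝ) + 1) ^ ((1 : ℝ) / 3)) :
    ∀ k, τ ≤ k →
      a (k + 1) ≤ (τ : ℝ) ^ 2 * a τ / ((k : ℝ) + 1) ^ 2
        + c / ((k : ℝ) + 1) ^ ((2 : ℝ) / 3) := by
  have key : ∀ k, τ ≤ k →
      ((k : ℝ) + 1) ^ 2 * a (k + 1) ≤
        (τ : ℝ) ^ 2 * a τ + c * ((k : ℝ) + 1) ^ ((4 : ℝ) / 3) := by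
    intro k hk
    induction k, hk using Nat.le_induction with
    | base =>
        have h := hrec τ le_rfl
        have h1 : (1 : ℝ) ≤ (τ : ℝ) + 1 := by
          have := Nat.cast_nonneg (α := ℝ) τ; linarith
        have h2 : ((τ : ℝ) + 1) ^ ((1 : ℝ) / 3) ≤ ((τ : ℝ) + 1) ^ ((4 : ℝ) / 3) :=
          Real.rpow_le_rpow_of_exponent_le h1 (by norm_num)
        nlinarith [mul_le_mul_of_nonneg_left h2 hc]
    | succ k hk ih =>
        have h := hrec (k + 1) (le_trans hk (Nat.le_succ k))
        push_cast at h ⊢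
        have hx : (0 : ℝ) < (k : ℝ) + 1 := by positivity
        have hy : (0 : ℝ) < (k : ℝ) + 2 := by positivity
        -- (k+1)^{4/3} + (k+2)^{1/3} ≤ (k+2)^{4/3}
        have e1 := Real.rpow_add hx ((1:ℝ)/3) 1
        rw [Real.rpow_one] at e1
        norm_num at e1
        have e2 := Real.rpow_add hy ((1:ℝ)/3) 1
        rw [Real.rpow_one] at e2
        norm_num at e2
        have hm : ((k : ℝ) + 1) ^ ((1 : ℝ) / 3) ≤ ((k : ℝ) + 2) ^ ((1 : ℝ) / 3) :=
          Real.rpow_le_rpow (le_of_lt hx) (by linarith) (by norm_num)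
        have hsum : ((k : ℝ) + 1) ^ ((4 : ℝ) / 3) + ((k : ℝ) + 2) ^ ((1 : ℝ) / 3)
            ≤ ((k : ℝ) + 2) ^ ((4 : ℝ) / 3) := by
          rw [e1, e2]
          nlinarith [hm, hx.le]
        have hcast : ((k : ℝ) + 1 + 1) = (k : ℝ) + 2 := by ring
        rw [hcast] at h ⊢
        nlinarith [mul_le_mul_of_nonneg_left hsum hc]
  intro k hk
  have hx : (0 : ℝ) < (k : ℝ) + 1 := by positivity
  have h := key k hk
  have hx2 : (0 : ℝ) < ((k : ℝ) + 1) ^ 2 := by positivity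
  rw [div_add_div _ _ (ne_of_gt hx2) (ne_of_gt (Real.rpow_pos_of_pos hx _))]
  rw [le_div_iff₀ (by positivity)]
  have e3 : ((k : ℝ) + 1) ^ ((4 : ℝ) / 3) * ((k : ℝ) + 1) ^ ((2 : ℝ) / 3)
      = ((k : ℝ) + 1) ^ 2 := by
    rw [← Real.rpow_add hx]
    norm_num
  calc a (k + 1) * (((k : ℝ) + 1) ^ 2 * ((k : ℝ) + 1) ^ ((2 : ℝ) / 3))
      = (((k : ℝ) + 1) ^ 2 * a (k + 1)) * ((k : ℝ) + 1) ^ ((2 : ℝ) / 3) := by ring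
    _ ≤ ((τ : ℝ) ^ 2 * a τ + c * ((k : ℝ) + 1) ^ ((4 : ℝ) / 3))
          * ((k : ℝ) + 1) ^ ((2 : ℝ) / 3) := by
        apply mul_le_mul_of_nonneg_right h (le_of_lt (Real.rpow_pos_of_pos hx _))
    _ = (τ : ℝ) ^ 2 * a τ * ((k : ℝ) + 1) ^ ((2 : ℝ) / 3)
          + c * (((k : ℝ) + 1) ^ ((4 : ℝ) / 3) * ((k : ℝ) + 1) ^ ((2 : ℝ) / 3)) := by ring
    _ = (τ : ℝ) ^ 2 * a τ * ((k : ℝ) + 1) ^ ((2 : ℝ) / 3) + ((k : ℝ) + 1) ^ 2 * c := by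
        rw [e3]; ring
end
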